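/- Let p ≥ 1 be a real number, let ε > 0, and let k be a positive integer with k ≥ (3p)^p·(1+ε)/ε². Then (1/k) · ∑_{j=0}^{k−1} (1 + 3·(1+ε)^{−j})^p ≤ 1 + ε. -/

import Mathlib

/-!
Put `q = (1 + ε)⁻¹`, so that the `j`-th term is `(1 + 3 q ^ j) ^ p`. By convexity of `x ↦ x ^ p`
on the segment `[1, 4]`, `(1 + 3 t) ^ p ≤ 1 + (4 ^ p - 1) t` for `t ∈ [0, 1]`, and
`4 ^ p ≤ (3 p) ^ p + 1` for `p ≥ 1`. Summing the geometric series, the sum is at most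
`k + (3 p) ^ p (1 + ε) / ε ≤ k + k ε`.
-/

open Finset Real

lemma log_three_le_five_div_three : log 3 ≤ 5 / 3 := by
  have h34 : log 3 ≤ log 4 := log_le_log (by norm_num) (by norm_num)
  have h4 : log 4 = 2 * log 2 := by
    rw [show (4 : ℝ) = 2 ^ 2 by norm_num, log_pow]; norm_num
  linarith [log_two_lt_d9]

lemma three_rpow_mul_one_sub_le_one {s : ℝ} (hs : 0 ≤ s) :
    (3 : ℝ) ^ s * (1 - 5 / 3 * s) ≤ 1 := by
  have h : 1 - 5 / 3 * s ≤ (3 : ℝ) ^ (-s) := calc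
    1 - 5 / 3 * s ≤ exp (-(5 / 3 * s)) := one_sub_le_exp_neg _
    _ ≤ exp (-(s * log 3)) := exp_le_exp.2 (by nlinarith [log_three_le_five_div_three])
    _ = (3 : ℝ) ^ (-s) := by rw [rpow_def_of_pos (by norm_num)]; ring_nf
  calc (3 : ℝ) ^ s * (1 - 5 / 3 * s) ≤ 3 ^ s * 3 ^ (-s) := by gcongr
    _ = 1 := by rw [← rpow_add (by norm_num), add_neg_cancel, rpow_zero]

/-- Equality holds at `p = 1`, so for `1 < p < 4 / 3` we write `p = 1 + s`, bound `(4 / 3) ^ s`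
by Bernoulli's inequality and compare both sides against multiples of `3 ^ s`. -/
lemma four_rpow_le_three_mul_rpow_add_one {p : ℝ} (hp : 1 ≤ p) :
    (4 : ℝ) ^ p ≤ (3 * p) ^ p + 1 := by
  rcases le_or_gt (4 / 3) p with hp' | hp'
  · have : (4 : ℝ) ^ p ≤ (3 * p) ^ p := by gcongr; linarith
    linarith
  obtain ⟨s, hs, rfl⟩ : ∃ s, 0 ≤ s ∧ p = 1 + s := ⟨p - 1, by linarith, by ring⟩
  have hbernoulli : (4 / 3 : ℝ) ^ s ≤ 1 + s / 3 := by
    have := rpow_one_add_le_one_add_mul_self (s := 1 / 3) (by norm_num) hs (by linarith)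
    norm_num at this ⊢; linarith
  have hlower : 3 * (1 + s) * 3 ^ s ≤ (3 * (1 + s)) ^ (1 + s) := by
    rw [rpow_add (by positivity), rpow_one]
    gcongr; linarith
  calc (4 : ℝ) ^ (1 + s) = 4 * (4 / 3) ^ s * 3 ^ s := by
        rw [rpow_add (by norm_num), rpow_one, mul_assoc, ← mul_rpow (by norm_num) (by norm_num)]
        norm_num
    _ ≤ 4 * (1 + s / 3) * 3 ^ s := by gcongr
    _ = 3 * (1 + s) * 3 ^ s + 3 ^ s * (1 - 5 / 3 * s) := by ring
    _ ≤ (3 * (1 + s)) ^ (1 + s) + 1 := add_le_add hlower (three_rpow_mul_one_sub_le_one hs)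

lemma one_add_three_mul_rpow_le {p t : ℝ} (hp : 1 ≤ p) (ht0 : 0 ≤ t) (ht1 : t ≤ 1) :
    (1 + 3 * t) ^ p ≤ 1 + (3 * p) ^ p * t := by
  have hconvex := (convexOn_rpow hp).2 (Set.mem_Ici.2 zero_le_one) (Set.mem_Ici.2 zero_le_four)
    (sub_nonneg.2 ht1) ht0 (sub_add_cancel 1 t)
  simp only [smul_eq_mul, one_rpow] at hconvex
  calc (1 + 3 * t) ^ p = ((1 - t) * 1 + t * 4) ^ p := by congr 1; ring
    _ ≤ (1 - t) * 1 + t * 4 ^ p := hconvex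
    _ ≤ (1 - t) * 1 + t * ((3 * p) ^ p + 1) := by
      gcongr; exact four_rpow_le_three_mul_rpow_add_one hp
    _ = 1 + (3 * p) ^ p * t := by ring

lemma sum_one_add_three_mul_pow_rpow_le {p q : ℝ} (hp : 1 ≤ p) (hq0 : 0 ≤ q) (hq1 : q < 1)
    (k : ℕ) : ∑ j ∈ range k, (1 + 3 * q ^ j) ^ p ≤ k + (3 * p) ^ p / (1 - q) := calc
  ∑ j ∈ range k, (1 + 3 * q ^ j) ^ p ≤ ∑ j ∈ range k, (1 + (3 * p) ^ p * q ^ j) :=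
    sum_le_sum fun j _ => one_add_three_mul_rpow_le hp (by positivity) (pow_le_one₀ hq0 hq1.le)
  _ = k + (3 * p) ^ p * ∑ j ∈ range k, q ^ j := by
    rw [sum_add_distrib, ← mul_sum]; simp
  _ ≤ k + (3 * p) ^ p * (1 / (1 - q)) := by
    gcongr
    rw [range_eq_Ico]
    simpa using geom_sum_Ico_le_of_lt_one (m := 0) (n := k) hq0 hq1
  _ = k + (3 * p) ^ p / (1 - q) := by rw [mul_one_div]

theorem segmented_tsp_averaging_general
    (p ε : ℝ) (hp : 1 ≤ p) (hε : 0 < ε) (k : ℕ)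
    (hklarge : (3 * p) ^ p * (1 + ε) / ε ^ 2 ≤ (k : ℝ)) :
    (1 / (k : ℝ)) *
        ∑ j ∈ Finset.range k, (1 + 3 * (1 + ε) ^ (-(j : ℝ))) ^ p ≤ 1 + ε := by
  have hpow (j : ℕ) : (1 + ε) ^ (-(j : ℝ)) = (1 + ε)⁻¹ ^ j := by
    rw [rpow_neg (by positivity), rpow_natCast, inv_pow]
  have hgeom : (3 * p) ^ p / (1 - (1 + ε)⁻¹) = (3 * p) ^ p * (1 + ε) / ε := by
    field_simp [hε.ne']
    ring
  have hsum := sum_one_add_three_mul_pow_rpow_le hp (q := (1 + ε)⁻¹) (by positivity)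
    (inv_lt_one_of_one_lt₀ (by linarith)) k
  simp only [← hpow, hgeom] at hsum
  have hbudget : (3 * p) ^ p * (1 + ε) / ε ≤ k * ε := calc
    (3 * p) ^ p * (1 + ε) / ε = (3 * p) ^ p * (1 + ε) / ε ^ 2 * ε := by field_simp
    _ ≤ k * ε := by gcongr
  rw [one_div_mul_eq_div]
  exact div_le_of_le_mul₀ k.cast_nonneg (by positivity) (by linarith)

/-- Key averaging estimate in the reduction of `L_p` TSP to Segmented TSP:
for `p ≥ 1`, `ε > 0` and a positive integer `k ≥ (3p)^p (1+ε)/ε²`, the average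
`(1/k) ∑_{j=0}^{k−1} (1 + 3(1+ε)^{−j})^p` is at most `1 + ε`. -/
theorem segmented_tsp_averaging
    (p ε : ℝ) (hp : 1 ≤ p) (hε : 0 < ε) (k : ℕ) (hk : 0 < k)
    (hklarge : (3 * p) ^ p * (1 + ε) / ε ^ 2 ≤ (k : ℝ)) :
    (1 / (k : ℝ)) *
        ∑ j ∈ Finset.range k, (1 + 3 * (1 + ε) ^ (-(j : ℝ))) ^ p ≤ 1 + ε :=
  segmented_tsp_averaging_general p ε hp hε k hklarge
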